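/- Let Q be a finite group, G a Q-group, and M a Q-G module such that |Q| is invertible in M. Then for every n ≥ 0 there is an isomorphism HH^n_Q(G, M) ≅ H^n(G, M)^Q, where H^n(G, M)^Q denotes the fixed points of the Q-action on the ordinary group cohomology induced by the Q-action on cochains. -/

import Mathlib

namespace InvariantCohomology

noncomputable section

/-- The `i`-th inner face of an inhomogeneous `(n+1)`-tuple: multiply the `i`-th and
`(i+1)`-st entries. -/
def fm {G : Type*} [Group G] {n : ℕ} (g : Fin (n + 1) → G) (i : Fin n) : Fin n → G :=
  fun j =>
    if (j : ℕ) < (i : ℕ) then g j.castSucc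
    else if j = i then g i.castSucc * g i.succ
    else g j.succ

variable (G Q M : Type*) [Group G] [Group Q] [MulDistribMulAction Q G]
  [AddCommGroup M] [DistribMulAction G M] [DistribMulAction Q M]

/-- Inhomogeneous `n`-cochains of `G` with values in `M`. -/
abbrev Cc (n : ℕ) : Type _ := (Fin n → G) → M

/-- The differential of the inhomogeneous cochain complex:
`(δf)(g₁,…,g_{n+1}) = g₁ • f(g₂,…,g_{n+1}) + ∑ᵢ (-1)ⁱ f(g₁,…,gᵢgᵢ₊₁,…,g_{n+1})
  + (-1)^{n+1} f(g₁,…,gₙ)`. -/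
def cb (n : ℕ) : Cc G M n →+ Cc G M (n + 1) where
  toFun f := fun g =>
    g 0 • f (Fin.tail g)
      + ∑ i : Fin n, ((-1 : ℤ) ^ ((i : ℕ) + 1)) • f (fm g i)
      + ((-1 : ℤ) ^ (n + 1)) • f (Fin.init g)
  map_zero' := by funext g; simp
  map_add' f₁ f₂ := by
    funext g
    simp only [Pi.add_apply, smul_add, Finset.sum_add_distrib]
    abel

/-- The differential, re-indexed as a map `Cⁿ⁻¹ → Cⁿ` (zero for `n = 0`). -/
def cdd : ∀ n : ℕ, Cc G M (n - 1) →+ Cc G M n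
  | 0 => 0
  | n + 1 => cb G M n

/-- The action of `q : Q` on cochains, `(q • f)(g₁,…,gₙ) = q • f(q⁻¹g₁,…,q⁻¹gₙ)`. -/
def qcc (q : Q) (n : ℕ) : Cc G M n →+ Cc G M n where
  toFun f := fun g => q • f (q⁻¹ • g)
  map_zero' := by funext g; simp
  map_add' f₁ f₂ := by funext g; simp [smul_add]

/-- The subgroup of `Q`-invariant cochains. -/
def invCc (n : ℕ) : AddSubgroup (Cc G M n) where
  carrier := { f | ∀ q : Q, qcc G Q M q n f = f }
  add_mem' := by intro a b ha hb q; rw [map_add, ha q, hb q]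
  zero_mem' := fun q => map_zero _
  neg_mem' := by intro a ha q; rw [map_neg, ha q]

/-- Invariant cocycles. -/
def ccycQ (n : ℕ) : AddSubgroup (Cc G M n) := (cb G M n).ker ⊓ invCc G Q M n

/-- Coboundaries of invariant cochains. -/
def cbdryQ (n : ℕ) : AddSubgroup (Cc G M n) := (invCc G Q M (n - 1)).map (cdd G M n)

/-- The invariant cohomology `HHⁿ_Q(G, M)`: the cohomology of the subcomplex of
`Q`-invariant cochains. -/
def HHQ (n : ℕ) : Type _ := ccycQ G Q M n ⧸ ((cbdryQ G Q M n).addSubgroupOf (ccycQ G Q M n))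

instance (n : ℕ) : AddCommGroup (HHQ G Q M n) := QuotientAddGroup.Quotient.addCommGroup _

/-- The ordinary group cohomology `Hⁿ(G, M)`, computed from inhomogeneous cochains. -/
def Hcoh (n : ℕ) : Type _ :=
  (cb G M n).ker ⧸ ((cdd G M n).range.addSubgroupOf (cb G M n).ker)

instance (n : ℕ) : AddCommGroup (Hcoh G M n) := QuotientAddGroup.Quotient.addCommGroup _

theorem fm_qsmul (q : Q) {n : ℕ} (g : Fin (n + 1) → G) (i : Fin n) :
    fm (q • g) i = q • fm g i := by
  funext j
  simp only [fm, Pi.smul_apply]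
  split_ifs <;> simp [smul_mul']

theorem cb_qcc (hc : ∀ (q : Q) (g : G) (m : M), q • g • m = (q • g) • q • m)
    (q : Q) (n : ℕ) :
    (cb G M n).comp (qcc G Q M q n) = (qcc G Q M q (n + 1)).comp (cb G M n) := by
  refine AddMonoidHom.ext fun f => funext fun g => ?_
  show (g 0 • (q • f (q⁻¹ • Fin.tail g)))
      + (∑ i : Fin n, ((-1 : ℤ) ^ ((i : ℕ) + 1)) • (q • f (q⁻¹ • fm g i)))
      + ((-1 : ℤ) ^ (n + 1)) • (q • f (q⁻¹ • Fin.init g))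
    = q • ((q⁻¹ • g) 0 • f (Fin.tail (q⁻¹ • g))
      + ∑ i : Fin n, ((-1 : ℤ) ^ ((i : ℕ) + 1)) • f (fm (q⁻¹ • g) i)
      + ((-1 : ℤ) ^ (n + 1)) • f (Fin.init (q⁻¹ • g)))
  rw [smul_add, smul_add]
  have htail : Fin.tail (q⁻¹ • g) = q⁻¹ • Fin.tail g := rfl
  have hinit : Fin.init (q⁻¹ • g) = q⁻¹ • Fin.init g := rfl
  congr 1
  · congr 1
    · rw [htail, hc]
      congr 1
      show g 0 = q • ((q⁻¹ • g) 0)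
      show g 0 = q • (q⁻¹ • g 0)
      rw [smul_inv_smul]
    · rw [Finset.smul_sum]
      refine Finset.sum_congr rfl fun i _ => ?_
      rw [fm_qsmul, smul_comm]
  · rw [hinit, smul_comm]

theorem cdd_qcc (hc : ∀ (q : Q) (g : G) (m : M), q • g • m = (q • g) • q • m)
    (q : Q) (n : ℕ) :
    (cdd G M n).comp (qcc G Q M q (n - 1)) = (qcc G Q M q n).comp (cdd G M n) := by
  cases n with
  | zero =>
    show (0 : Cc G M 0 →+ Cc G M 0).comp (qcc G Q M q 0)
      = (qcc G Q M q 0).comp (0 : Cc G M 0 →+ Cc G M 0)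
    simp
  | succ n => exact cb_qcc G Q M hc q n

/-- The induced action of `q : Q` on the cohomology `Hⁿ(G, M)`; it is well defined thanks
to the `Q`-`G` module compatibility condition `hc`. -/
def qHcoh (hc : ∀ (q : Q) (g : G) (m : M), q • g • m = (q • g) • q • m) (q : Q) (n : ℕ) :
    Hcoh G M n →+ Hcoh G M n :=
  QuotientAddGroup.map _ _
    (((qcc G Q M q n).comp (cb G M n).ker.subtype).codRestrict _ (by
      intro x
      have := congrArg (fun F : Cc G M n →+ Cc G M (n + 1) => F (x : Cc G M n))
        (cb_qcc G Q M hc q n)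
      simp only [AddMonoidHom.comp_apply] at this
      have hx : cb G M n (x : Cc G M n) = 0 := x.2
      show qcc G Q M q n (x : Cc G M n) ∈ (cb G M n).ker
      have hmem : cb G M n (qcc G Q M q n (x : Cc G M n)) = 0 := by
        rw [this, hx, map_zero]
      exact hmem))
    (by
      intro x hx
      rw [AddSubgroup.mem_addSubgroupOf] at hx
      obtain ⟨y, hy⟩ := hx
      rw [AddSubgroup.mem_comap, AddSubgroup.mem_addSubgroupOf]
      refine ⟨qcc G Q M q (n - 1) y, ?_⟩
      have := congrArg (fun F : Cc G M (n - 1) →+ Cc G M n => F y) (cdd_qcc G Q M hc q n)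
      simp only [AddMonoidHom.comp_apply] at this
      show cdd G M n (qcc G Q M q (n - 1) y) = _
      rw [this, hy]
      rfl)

/-- The subgroup `Hⁿ(G, M)^Q` of `Q`-invariant cohomology classes. -/
def HcohInv (hc : ∀ (q : Q) (g : G) (m : M), q • g • m = (q • g) • q • m) (n : ℕ) :
    AddSubgroup (Hcoh G M n) where
  carrier := { x | ∀ q : Q, qHcoh G Q M hc q n x = x }
  add_mem' := by intro a b ha hb q; rw [map_add, ha q, hb q]
  zero_mem' := fun q => map_zero _
  neg_mem' := by intro a ha q; rw [map_neg, ha q]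

end

end InvariantCohomology

/-!
Averaging over `Q`, `f ↦ |Q|⁻¹ ∑_q q • f`, commutes with the differential (each `q` acts by a
cochain map thanks to the compatibility condition) and is a projection onto the invariant
cochains. So an invariant cocycle `f = δy` is also `δ(avg y)`, which gives injectivity; and if
the class of a cocycle `f` is `Q`-fixed, then `∑_q (q • f - f)` is a coboundary, hence so is
`avg f - f`, which gives surjectivity.
-/

section ZsmulEquiv

variable {A B : Type*} [AddCommGroup A] [AddCommGroup B] {k : ℤ}

noncomputable def zsmulEquivOfBijective (hA : Function.Bijective fun a : A => k • a) : A ≃+ A :=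
  AddEquiv.ofBijective (zsmulAddGroupHom k) hA

theorem zsmulEquivOfBijective_symm_zsmul (hA : Function.Bijective fun a : A => k • a) (a : A) :
    (zsmulEquivOfBijective hA).symm (k • a) = a :=
  (zsmulEquivOfBijective hA).symm_apply_apply a

theorem map_zsmulEquivOfBijective_symm (hA : Function.Bijective fun a : A => k • a)
    (hB : Function.Bijective fun b : B => k • b) (φ : A →+ B) (a : A) :
    φ ((zsmulEquivOfBijective hA).symm a) = (zsmulEquivOfBijective hB).symm (φ a) := by
  apply hB.1
  change k • φ _ = zsmulEquivOfBijective hB ((zsmulEquivOfBijective hB).symm (φ a))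
  rw [← map_zsmul, AddEquiv.apply_symm_apply]
  exact congrArg φ ((zsmulEquivOfBijective hA).apply_symm_apply a)

theorem bijective_zsmul_pi {X : Type*} (hA : Function.Bijective fun a : A => k • a) :
    Function.Bijective fun f : X → A => k • f :=
  hA.comp_left

end ZsmulEquiv

namespace InvariantCohomology

variable {G Q M : Type*} [Group G] [Group Q] [MulDistribMulAction Q G]
  [AddCommGroup M] [DistribMulAction Q M]

theorem qcc_qcc (q q' : Q) {n : ℕ} (f : Cc G M n) :
    qcc G Q M q n (qcc G Q M q' n f) = qcc G Q M (q * q') n f := by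
  funext g
  simp [qcc, mul_smul]

section Averaging

variable [Fintype Q]

variable (G Q M) in
def normCc (n : ℕ) : Cc G M n →+ Cc G M n := ∑ q : Q, qcc G Q M q n

theorem normCc_apply {n : ℕ} (f : Cc G M n) : normCc G Q M n f = ∑ q : Q, qcc G Q M q n f :=
  AddMonoidHom.finsetSum_apply _ _ _

theorem map_normCc {m n : ℕ} (φ : Cc G M m →+ Cc G M n)
    (hφ : ∀ q : Q, φ.comp (qcc G Q M q m) = (qcc G Q M q n).comp φ) (f : Cc G M m) :
    φ (normCc G Q M m f) = normCc G Q M n (φ f) := by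
  simp only [normCc_apply, map_sum]
  exact Finset.sum_congr rfl fun q _ => DFunLike.congr_fun (hφ q) f

theorem normCc_mem_invCc {n : ℕ} (f : Cc G M n) : normCc G Q M n f ∈ invCc G Q M n := by
  intro q
  simp only [normCc_apply, map_sum, qcc_qcc]
  exact Fintype.sum_equiv (Equiv.mulLeft q) _ _ fun _ => rfl

theorem normCc_of_mem_invCc {n : ℕ} {f : Cc G M n} (hf : f ∈ invCc G Q M n) :
    normCc G Q M n f = (Fintype.card Q : ℤ) • f := by
  rw [normCc_apply, Finset.sum_congr rfl fun q _ => hf q, Finset.sum_const, Finset.card_univ,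
    natCast_zsmul]

variable (hM : Function.Bijective fun m : M => (Fintype.card Q : ℤ) • m)

variable (G Q M) in
noncomputable def avg (n : ℕ) : Cc G M n →+ Cc G M n :=
  (zsmulEquivOfBijective (bijective_zsmul_pi hM)).symm.toAddMonoidHom.comp (normCc G Q M n)

theorem avg_apply {n : ℕ} (f : Cc G M n) :
    avg G Q M hM n f = (zsmulEquivOfBijective (bijective_zsmul_pi hM)).symm (normCc G Q M n f) :=
  rfl

theorem map_avg {m n : ℕ} (φ : Cc G M m →+ Cc G M n)
    (hφ : ∀ q : Q, φ.comp (qcc G Q M q m) = (qcc G Q M q n).comp φ) (f : Cc G M m) :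
    φ (avg G Q M hM m f) = avg G Q M hM n (φ f) := by
  rw [avg_apply, avg_apply, map_zsmulEquivOfBijective_symm _ (bijective_zsmul_pi hM),
    map_normCc φ hφ]

theorem avg_mem_invCc {n : ℕ} (f : Cc G M n) : avg G Q M hM n f ∈ invCc G Q M n := by
  intro q
  rw [avg_apply, map_zsmulEquivOfBijective_symm _ (bijective_zsmul_pi hM), normCc_mem_invCc f q]

theorem avg_of_mem_invCc {n : ℕ} {f : Cc G M n} (hf : f ∈ invCc G Q M n) :
    avg G Q M hM n f = f := by
  rw [avg_apply, normCc_of_mem_invCc hf, zsmulEquivOfBijective_symm_zsmul]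

end Averaging

section Comparison

variable [DistribMulAction G M] (hc : ∀ (q : Q) (g : G) (m : M), q • g • m = (q • g) • q • m)

theorem Hcoh_mk_eq_mk_iff {n : ℕ} (f f' : (cb G M n).ker) :
    (QuotientAddGroup.mk f : Hcoh G M n) = QuotientAddGroup.mk f' ↔
      (f : Cc G M n) - f' ∈ (cdd G M n).range :=
  QuotientAddGroup.eq_iff_sub_mem

theorem Hcoh_mk_eq_zero_iff {n : ℕ} (f : (cb G M n).ker) :
    (QuotientAddGroup.mk f : Hcoh G M n) = 0 ↔ (f : Cc G M n) ∈ (cdd G M n).range :=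
  QuotientAddGroup.eq_zero_iff f

theorem mk_mem_HcohInv_iff {n : ℕ} (f : (cb G M n).ker) :
    (QuotientAddGroup.mk f : Hcoh G M n) ∈ HcohInv G Q M hc n ↔
      ∀ q : Q, qcc G Q M q n f - f ∈ (cdd G M n).range :=
  forall_congr' fun _ => Hcoh_mk_eq_mk_iff _ _

variable (G Q M) in
def toHcoh (n : ℕ) : HHQ G Q M n →+ Hcoh G M n :=
  QuotientAddGroup.map _ _ (AddSubgroup.inclusion inf_le_left)
    fun _ hf => AddSubgroup.map_le_range _ _ hf

theorem toHcoh_mem {n : ℕ} (x : HHQ G Q M n) : toHcoh G Q M n x ∈ HcohInv G Q M hc n := by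
  induction x using QuotientAddGroup.induction_on with | H f => ?_
  refine (mk_mem_HcohInv_iff hc _).2 fun q => ?_
  change qcc G Q M q n f - f ∈ _
  rw [sub_eq_zero.2 (f.2.2 q)]
  exact zero_mem _

variable (G Q M) in
def comparison (n : ℕ) : HHQ G Q M n →+ HcohInv G Q M hc n :=
  (toHcoh G Q M n).codRestrict _ (toHcoh_mem hc)

variable [Fintype Q] (hM : Function.Bijective fun m : M => (Fintype.card Q : ℤ) • m)

include hc in
theorem cb_avg {n : ℕ} (f : Cc G M n) :
    cb G M n (avg G Q M hM n f) = avg G Q M hM (n + 1) (cb G M n f) :=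
  map_avg hM _ (cb_qcc G Q M hc · n) f

include hc in
theorem cdd_avg {n : ℕ} (f : Cc G M (n - 1)) :
    cdd G M n (avg G Q M hM (n - 1) f) = avg G Q M hM n (cdd G M n f) :=
  map_avg hM _ (cdd_qcc G Q M hc · n) f

include hc in
theorem avg_mem_ccycQ {n : ℕ} {f : Cc G M n} (hf : f ∈ (cb G M n).ker) :
    avg G Q M hM n f ∈ ccycQ G Q M n :=
  ⟨AddMonoidHom.mem_ker.2 (by rw [cb_avg hc hM, hf, map_zero]), avg_mem_invCc hM f⟩

include hc hM in
theorem mem_cbdryQ_of_mem_range {n : ℕ} {f : Cc G M n} (hf : f ∈ invCc G Q M n)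
    (hb : f ∈ (cdd G M n).range) : f ∈ cbdryQ G Q M n := by
  obtain ⟨y, rfl⟩ := hb
  exact ⟨avg G Q M hM (n - 1) y, avg_mem_invCc hM y,
    by rw [cdd_avg hc hM, avg_of_mem_invCc hM hf]⟩

theorem avg_sub_mem_range {n : ℕ} {f : Cc G M n}
    (hf : ∀ q : Q, qcc G Q M q n f - f ∈ (cdd G M n).range) :
    avg G Q M hM n f - f ∈ (cdd G M n).range := by
  have hnorm : normCc G Q M n f - (Fintype.card Q : ℤ) • f ∈ (cdd G M n).range := by
    rw [normCc_apply, natCast_zsmul, ← Finset.card_univ, ← Finset.sum_const,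
      ← Finset.sum_sub_distrib]
    exact AddSubgroup.sum_mem _ fun q _ => hf q
  obtain ⟨y, hy⟩ := hnorm
  refine ⟨(zsmulEquivOfBijective (bijective_zsmul_pi hM)).symm y, ?_⟩
  rw [map_zsmulEquivOfBijective_symm _ (bijective_zsmul_pi hM), hy, map_sub,
    zsmulEquivOfBijective_symm_zsmul, avg_apply]

include hM in
theorem comparison_injective (n : ℕ) : Function.Injective (comparison G Q M hc n) := by
  refine (injective_iff_map_eq_zero _).2 fun x => ?_
  induction x using QuotientAddGroup.induction_on with | H f => ?_
  intro hf
  have hb : (f : Cc G M n) ∈ (cdd G M n).range :=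
    (Hcoh_mk_eq_zero_iff (⟨f, f.2.1⟩ : (cb G M n).ker)).1 (congrArg Subtype.val hf)
  exact (QuotientAddGroup.eq_zero_iff f).2 (mem_cbdryQ_of_mem_range hc hM f.2.2 hb)

include hM in
theorem comparison_surjective (n : ℕ) : Function.Surjective (comparison G Q M hc n) := by
  rintro ⟨z, hz⟩
  induction z using QuotientAddGroup.induction_on with | H f => ?_
  refine ⟨QuotientAddGroup.mk ⟨_, avg_mem_ccycQ hc hM f.2⟩, Subtype.ext ?_⟩
  exact (Hcoh_mk_eq_mk_iff _ _).2 (avg_sub_mem_range hM ((mk_mem_HcohInv_iff hc f).1 hz))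

end Comparison

end InvariantCohomology

open InvariantCohomology in
/-- If `Q` is finite and `|Q|` is invertible in the `Q`-`G` module `M`,
then `HHⁿ_Q(G, M) ≅ Hⁿ(G, M)^Q` for every `n`. -/
theorem invariant_cohomology_iso_fixedPoints
    (G Q M : Type*) [Group G] [Group Q] [MulDistribMulAction Q G]
    [AddCommGroup M] [DistribMulAction G M] [DistribMulAction Q M] [Fintype Q]
    (hc : ∀ (q : Q) (g : G) (m : M), q • g • m = (q • g) • q • m)
    (hM : Function.Bijective fun m : M => (Fintype.card Q : ℤ) • m) (n : ℕ) :
    Nonempty (HHQ G Q M n ≃+ HcohInv G Q M hc n) :=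
  ⟨AddEquiv.ofBijective (comparison G Q M hc n)
    ⟨comparison_injective hc hM n, comparison_surjective hc hM n⟩⟩
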